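/- For every s ∈ ℂ with (M·s² + D·s + 3B)·(M·s + D) ≠ 0, the matrix s·I₅ − A is invertible and every off-diagonal entry of the transfer matrix H(s) = C·(s·I₅ − A)⁻¹·B_in satisfies H(s)_{ij} = B/((M·s² + D·s + 3B)·(M·s + D)) for all i ≠ j in {1, 2, 3}. -/

import Mathlib

open Matrix

noncomputable section

/-- The complexified 5×5 state matrix of three identical multi-loop droop GFMs in a
triangle network: A = [[0, A₁₂],[A₂₁, −(D/M)·I₃]] with A₁₂ = [[1,0,−1],[0,1,−1]] and
A₂₁ = (B/M)·[[−2,1],[1,−2],[1,1]]. -/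
def A3 (M D B : ℝ) : Matrix (Fin 5) (Fin 5) ℂ :=
  !![0, 0, 1, 0, -1;
     0, 0, 0, 1, -1;
     -2 * B / M, B / M, -D / M, 0, 0;
     B / M, -2 * B / M, 0, -D / M, 0;
     B / M, B / M, 0, 0, -D / M]

/-- The 5×3 input matrix B_in = [0_{2×3}; (1/M)·I₃]. -/
def Bin3 (M : ℝ) : Matrix (Fin 5) (Fin 3) ℂ :=
  !![0, 0, 0;
     0, 0, 0;
     1 / M, 0, 0;
     0, 1 / M, 0;
     0, 0, 1 / M]

/-- The 3×5 output matrix C = [0_{3×2} | I₃], selecting the three frequencies. -/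
def Cout : Matrix (Fin 3) (Fin 5) ℂ :=
  !![0, 0, 1, 0, 0;
     0, 0, 0, 1, 0;
     0, 0, 0, 0, 1]

/-- The transfer matrix H(s) = C·(s·I₅ − A)⁻¹·B_in from bus power disturbances to
GFM frequency deviations. -/
def H (M D B : ℝ) (s : ℂ) : Matrix (Fin 3) (Fin 3) ℂ :=
  Cout * (s • (1 : Matrix (Fin 5) (Fin 5) ℂ) - A3 M D B)⁻¹ * Bin3 M

/-- Explicit inverse of s•I₅ − A. -/
def N5 (M D B : ℝ) (s : ℂ) : Matrix (Fin 5) (Fin 5) ℂ :=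
  let P : ℂ := (M : ℂ) * s ^ 2 + D * s + 3 * B
  let Q : ℂ := (M : ℂ) * s + D
  !![Q / P, 0, M / P, 0, -M / P;
     0, Q / P, 0, M / P, -M / P;
     -2 * B / P, B / P, M / Q - 2 * B * M / (P * Q), B * M / (P * Q), B * M / (P * Q);
     B / P, -2 * B / P, B * M / (P * Q), M / Q - 2 * B * M / (P * Q), B * M / (P * Q);
     B / P, B / P, B * M / (P * Q), B * M / (P * Q), M / Q - 2 * B * M / (P * Q)]


set_option maxHeartbeats 1600000 in
/-- For every s with (M·s² + D·s + 3B)·(M·s + D) ≠ 0, the matrix s·I₅ − A is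
invertible and every off-diagonal entry of H(s) equals
B/((M·s² + D·s + 3B)·(M·s + D)). -/
theorem H_offdiagonal (M D B : ℝ) (hM : 0 < M) (hD : 0 < D) (hB : 0 < B) (s : ℂ)
    (hs : ((M : ℂ) * s ^ 2 + D * s + 3 * B) * ((M : ℂ) * s + D) ≠ 0) :
    IsUnit (s • (1 : Matrix (Fin 5) (Fin 5) ℂ) - A3 M D B) ∧
      ∀ i j : Fin 3, i ≠ j → H M D B s i j =
        (B : ℂ) / (((M : ℂ) * s ^ 2 + D * s + 3 * B) * ((M : ℂ) * s + D)) := by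
  have hM0 : (M : ℂ) ≠ 0 := by exact_mod_cast hM.ne'
  have hP : ((M : ℂ) * s ^ 2 + D * s + 3 * B) ≠ 0 := left_ne_zero_of_mul hs
  have hQ : ((M : ℂ) * s + D) ≠ 0 := right_ne_zero_of_mul hs
  have hP4 : s * (s * (M : ℂ) + D) + 3 * B ≠ 0 := by
    intro hc; exact hP (by linear_combination hc)
  have hQ2 : s * (M : ℂ) + D ≠ 0 := by
    intro hc; exact hQ (by linear_combination hc)
  have key : (s • (1 : Matrix (Fin 5) (Fin 5) ℂ) - A3 M D B) * N5 M D B s = 1 := by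
    ext i j
    fin_cases i <;> fin_cases j <;>
      · simp [N5, A3, Matrix.mul_apply, Fin.sum_univ_five, Matrix.one_apply,
          Matrix.vecHead, Matrix.vecTail]
        try field_simp
        try ring
  refine ⟨(Matrix.isUnit_iff_isUnit_det _).mpr (Matrix.isUnit_det_of_right_inverse key), ?_⟩
  have hinv := Matrix.inv_eq_right_inv key
  have hX : ((B : ℂ) * M * D * 3 + B * M ^ 2 * s * 3 + M * s * D ^ 2
      + M ^ 2 * s ^ 2 * D * 2 + M ^ 3 * s ^ 3) ≠ 0 := by
    have h := mul_ne_zero hM0 (mul_ne_zero hP hQ)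
    intro hc; exact h (by linear_combination hc)
  intro i j hij
  rw [H, hinv]
  fin_cases i <;> fin_cases j <;> first
    | exact absurd rfl hij
    | · simp [N5, Cout, Bin3, Matrix.mul_apply, Fin.sum_univ_five, Fin.sum_univ_three,
          Matrix.vecHead, Matrix.vecTail]
        field_simp
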